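/- Let p : E → B be a fibration, (Q, δ, ε) a comonad on B, and (K, d, e) the lifted comonad. Then the comultiplication d is counital: for every object A, e_{KA} ∘ d_A = id_{KA} = K(e_A) ∘ d_A. -/

import Mathlib

namespace GrayPaper

open CategoryTheory

universe v u v' u'

variable {𝔼 : Type u} [Category.{v} 𝔼] {𝔹 : Type u'} [Category.{v'} 𝔹]

/-- A morphism `f : X ⟶ Y` in `𝔼` is `p`-Cartesian. -/
def PCart (p : 𝔼 ⥤ 𝔹) {X Y : 𝔼} (f : X ⟶ Y) : Prop :=
  ∀ {Z : 𝔼} (k : Z ⟶ Y) (u : p.obj Z ⟶ p.obj X),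
    u ≫ p.map f = p.map k → ∃! l : Z ⟶ X, p.map l = u ∧ l ≫ f = k

/-- A cleavage for `p`: a choice of Cartesian lift for every morphism of `𝔹` into the image
of an object of `𝔼`.  This presents `p` as a (cloven) Grothendieck fibration. -/
structure Cleavage (p : 𝔼 ⥤ 𝔹) where
  dom : ∀ (A : 𝔼) {X : 𝔹}, (X ⟶ p.obj A) → 𝔼
  domEq : ∀ (A : 𝔼) {X : 𝔹} (u : X ⟶ p.obj A), p.obj (dom A u) = X
  homOf : ∀ (A : 𝔼) {X : 𝔹} (u : X ⟶ p.obj A), dom A u ⟶ A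
  hom_over : ∀ (A : 𝔼) {X : 𝔹} (u : X ⟶ p.obj A),
    p.map (homOf A u) = eqToHom (domEq A u) ≫ u
  cart : ∀ (A : 𝔼) {X : 𝔹} (u : X ⟶ p.obj A), PCart p (homOf A u)

variable (p : 𝔼 ⥤ 𝔹) (c : Cleavage p) (Q : Comonad 𝔹)

/-- The object part of the lifted comonad: `K A` is the domain of the chosen Cartesian lift
of `ε_{p A}`. -/
def liftObj (A : 𝔼) : 𝔼 := c.dom A (Q.ε.app (p.obj A))

lemma liftObjEq (A : 𝔼) : p.obj (liftObj p c Q A) = Q.obj (p.obj A) := c.domEq A _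

/-- The counit of the lifted comonad: the chosen Cartesian lift of `ε_{p A}`. -/
def liftCounit (A : 𝔼) : liftObj p c Q A ⟶ A := c.homOf A (Q.ε.app (p.obj A))

lemma liftCounit_over (A : 𝔼) :
    p.map (liftCounit p c Q A) = eqToHom (liftObjEq p c Q A) ≫ Q.ε.app (p.obj A) :=
  c.hom_over A _

lemma liftCounit_cart (A : 𝔼) : PCart p (liftCounit p c Q A) := c.cart A _

lemma liftMap_aux {A A' : 𝔼} (f : A ⟶ A') :
    (eqToHom (liftObjEq p c Q A) ≫ Q.map (p.map f) ≫ eqToHom (liftObjEq p c Q A').symm) ≫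
        p.map (liftCounit p c Q A') = p.map (liftCounit p c Q A ≫ f) := by
  rw [p.map_comp, liftCounit_over, liftCounit_over]
  simp

/-- The morphism part of the lifted comonad: the unique Cartesian filler over `Q (p f)`. -/
noncomputable def liftMap {A A' : 𝔼} (f : A ⟶ A') : liftObj p c Q A ⟶ liftObj p c Q A' :=
  ((c.cart A' (Q.ε.app (p.obj A')) (liftCounit p c Q A ≫ f)
      (eqToHom (liftObjEq p c Q A) ≫ Q.map (p.map f) ≫ eqToHom (liftObjEq p c Q A').symm)
      (liftMap_aux p c Q f)).exists).choose

lemma liftComul_aux (A : 𝔼) :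
    (eqToHom (liftObjEq p c Q A) ≫ Q.δ.app (p.obj A) ≫
        eqToHom (congrArg Q.obj (liftObjEq p c Q A)).symm ≫
        eqToHom (liftObjEq p c Q (liftObj p c Q A)).symm) ≫
      p.map (liftCounit p c Q (liftObj p c Q A)) = p.map (𝟙 (liftObj p c Q A)) := by
  rw [liftCounit_over, p.map_id]
  have h := Q.ε.naturality (eqToHom (liftObjEq p c Q A))
  rw [eqToHom_map] at h
  rw [show Q.ε.app (p.obj (liftObj p c Q A)) =
        eqToHom (congrArg Q.obj (liftObjEq p c Q A)) ≫
          Q.ε.app (Q.obj (p.obj A)) ≫ eqToHom (liftObjEq p c Q A).symm from by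
      rw [← Category.assoc, h]; simp]
  simp

/-- The comultiplication of the lifted comonad: the unique filler over `δ_{p A}` of the
identity of `K A` through `e_{K A}`. -/
noncomputable def liftComul (A : 𝔼) : liftObj p c Q A ⟶ liftObj p c Q (liftObj p c Q A) :=
  ((c.cart (liftObj p c Q A) (Q.ε.app (p.obj (liftObj p c Q A))) (𝟙 (liftObj p c Q A))
      (eqToHom (liftObjEq p c Q A) ≫ Q.δ.app (p.obj A) ≫
        eqToHom (congrArg Q.obj (liftObjEq p c Q A)).symm ≫
        eqToHom (liftObjEq p c Q (liftObj p c Q A)).symm)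
      (liftComul_aux p c Q A)).exists).choose

/-! The first law holds by construction of `d_A`. For the second, `K(e_A) ∘ d_A` lies over
`Q(ε) ∘ δ = id` and satisfies `e_A ∘ K(e_A) ∘ d_A = e_A ∘ e_{K A} ∘ d_A = e_A`, exactly as
`id_{K A}` does; a Cartesian morphism is faithful on maps over the same base map, so the two
agree. -/

lemma PCart.hom_ext {p : 𝔼 ⥤ 𝔹} {X Y Z : 𝔼} {f : X ⟶ Y} (hf : PCart p f) {g h : Z ⟶ X}
    (hp : p.map g = p.map h) (hcomp : g ≫ f = h ≫ f) : g = h := by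
  obtain ⟨l, -, hl⟩ := hf (h ≫ f) (p.map h) (p.map_comp h f).symm
  exact (hl g ⟨hp, hcomp⟩).trans (hl h ⟨rfl, rfl⟩).symm

lemma liftMap_over {A A' : 𝔼} (f : A ⟶ A') :
    p.map (liftMap p c Q f) =
      eqToHom (liftObjEq p c Q A) ≫ Q.map (p.map f) ≫ eqToHom (liftObjEq p c Q A').symm :=
  ((c.cart A' _ _ _ (liftMap_aux p c Q f)).exists).choose_spec.1

lemma liftMap_liftCounit {A A' : 𝔼} (f : A ⟶ A') :
    liftMap p c Q f ≫ liftCounit p c Q A' = liftCounit p c Q A ≫ f :=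
  ((c.cart A' _ _ _ (liftMap_aux p c Q f)).exists).choose_spec.2

lemma liftComul_over (A : 𝔼) :
    p.map (liftComul p c Q A) =
      eqToHom (liftObjEq p c Q A) ≫ Q.δ.app (p.obj A) ≫
        eqToHom (congrArg Q.obj (liftObjEq p c Q A)).symm ≫
        eqToHom (liftObjEq p c Q (liftObj p c Q A)).symm :=
  ((c.cart _ _ _ _ (liftComul_aux p c Q A)).exists).choose_spec.1

lemma liftComul_liftCounit (A : 𝔼) :
    liftComul p c Q A ≫ liftCounit p c Q (liftObj p c Q A) = 𝟙 (liftObj p c Q A) :=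
  ((c.cart _ _ _ _ (liftComul_aux p c Q A)).exists).choose_spec.2

lemma map_liftComul_liftMap_liftCounit (A : 𝔼) :
    p.map (liftComul p c Q A ≫ liftMap p c Q (liftCounit p c Q A)) = 𝟙 _ := by
  rw [p.map_comp, liftComul_over, liftMap_over, liftCounit_over]
  -- after cancelling the transports this is the counit law `δ ≫ Q.map ε = 𝟙` of `Q`
  simp [eqToHom_map]

/-- the comultiplication `d` of the lifted comonad is counital:
`e_{K A} ∘ d_A = id_{K A} = K(e_A) ∘ d_A`. -/
theorem liftComul_counital (A : 𝔼) :
    liftComul p c Q A ≫ liftCounit p c Q (liftObj p c Q A) = 𝟙 (liftObj p c Q A) ∧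
    liftComul p c Q A ≫ liftMap p c Q (liftCounit p c Q A) = 𝟙 (liftObj p c Q A) := by
  refine ⟨liftComul_liftCounit p c Q A, PCart.hom_ext (liftCounit_cart p c Q A) ?_ ?_⟩
  · rw [map_liftComul_liftMap_liftCounit, p.map_id]
  · rw [Category.assoc, liftMap_liftCounit, ← Category.assoc, liftComul_liftCounit,
      Category.id_comp]

end GrayPaper
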